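/- arXiv:2311.00222 — 2 statements merged into one kernel-verified Lean document; each statement's English description precedes it below -/
import Mathlib

section
/- A strategy profile V̂ : Fin n → Finset (Fin m) is a Nash equilibrium of the partition game if and only if there exists a Nash equilibrium ŵ of the weight game with C(ŵ) = V̂, i.e., V̂ i = {q | ŵ i q = 1} for every agent i. -/
open Finset Filter

noncomputable def fsMax (s : Finset ℝ) : ℝ := s.max.unbotD 0

noncomputable def fsMin (s : Finset ℝ) : ℝ := s.min.untopD 0

noncomputable def fsSubmax (s : Finset ℝ) : ℝ := fsMax (s.filter (fun x => x < fsMax s))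

/-- Agent `i` is dominating for task `q`. -/
def Dominating {n m : ℕ} (f : Fin n → Fin m → ℝ) (i : Fin n) (q : Fin m) : Prop :=
  ∀ j, f j q ≤ f i q

/-- Maximum of `f j q` over agents `j ≠ i` with `q ∈ V j` (0 if that set is empty). -/
noncomputable def othersMax {n m : ℕ} (f : Fin n → Fin m → ℝ)
    (V : Fin n → Finset (Fin m)) (i : Fin n) (q : Fin m) : ℝ :=
  fsMax ((Finset.univ.filter (fun j => j ≠ i ∧ q ∈ V j)).image (fun j => f j q))

/-- Utility of agent `i` in the partition game. -/
noncomputable def Hutil {n m : ℕ} (f : Fin n → Fin m → ℝ)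
    (V : Fin n → Finset (Fin m)) (i : Fin n) : ℝ :=
  ∑ q ∈ V i, (f i q - othersMax f V i q)

/-- Nash equilibrium of the partition game. -/
def IsNashP {n m : ℕ} (f : Fin n → Fin m → ℝ) (V : Fin n → Finset (Fin m)) : Prop :=
  ∀ i, ∀ V' : Finset (Fin m), Hutil f (Function.update V i V') i ≤ Hutil f V i

/-- Maximum of `g j` over all `j ≠ i` (0 if that set is empty). -/
noncomputable def maxErase {n : ℕ} (i : Fin n) (g : Fin n → ℝ) : ℝ :=
  fsMax ((Finset.univ.erase i).image g)

/-- Utility of agent `i` in the weight game. -/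
noncomputable def Uutil {n m : ℕ} (f : Fin n → Fin m → ℝ) (w : Fin n → Fin m → ℝ)
    (i : Fin n) : ℝ :=
  ∑ q, (f i q * w i q - maxErase i (fun j => f j q * w j q) * w i q)

/-- All entries of the matrix lie in `[0,1]`. -/
def InUnit {n m : ℕ} (w : Fin n → Fin m → ℝ) : Prop :=
  ∀ i q, w i q ∈ Set.Icc (0 : ℝ) 1

/-- Nash equilibrium of the weight game. -/
def IsNashW {n m : ℕ} (f : Fin n → Fin m → ℝ) (w : Fin n → Fin m → ℝ) : Prop :=
  ∀ i, ∀ w' : Fin m → ℝ, (∀ q, w' q ∈ Set.Icc (0 : ℝ) 1) →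
    Uutil f (Function.update w i w') i ≤ Uutil f w i

/-!
Both utilities are separable over tasks, and an agent's own choice does not affect what the others
bid, so an equilibrium is the same as a best response task by task: in the partition game agent `i`
keeps `q` exactly when `f i q` beats the best competing claimant, and in the weight game `w i q` is
`1` when `f i q` beats the best competing bid `max_{j ≠ i} f j q * w j q` and `0` when it loses.
Indicator weights turn the first condition into the second. Conversely, given a weight equilibrium,
a task lost by `i` to a positive bid is lost to some agent `k` whose weight on it must be `1`:
otherwise `f k q` would exceed every competing bid and `k` would raise its weight.
-/

section BestResponse

theorem forall_sum_le_sum_iff {ι M : Type*} [DecidableEq ι] [AddCommGroup M] [PartialOrder M]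
    [IsOrderedAddMonoid M] (s : Finset ι) (c : ι → M) :
    (∀ t : Finset ι, ∑ x ∈ t, c x ≤ ∑ x ∈ s, c x) ↔
      ∀ x, (x ∈ s → 0 ≤ c x) ∧ (x ∉ s → c x ≤ 0) := by
  refine ⟨fun h x => ⟨fun hx => ?_, fun hx => ?_⟩, fun h t => ?_⟩
  · have := h (s.erase x)
    rw [← add_sum_erase s c hx] at this
    exact nonneg_of_le_add_left this
  · have := h (insert x s)
    rw [sum_insert hx] at this
    exact nonpos_of_add_le_left this
  · calc ∑ x ∈ t, c x = ∑ x ∈ t ∩ s, c x + ∑ x ∈ t \ s, c x :=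
          (sum_inter_add_sum_sdiff t s c).symm
      _ ≤ ∑ x ∈ t ∩ s, c x + 0 := by
        gcongr
        exact sum_nonpos fun x hx => (h x).2 (mem_sdiff.1 hx).2
      _ ≤ ∑ x ∈ s, c x := by
        rw [add_zero]
        exact sum_le_sum_of_subset_of_nonneg inter_subset_right
          fun x hx _ => (h x).1 hx

theorem sum_mul_lt_sum_update_mul {ι R : Type*} [Fintype ι] [DecidableEq ι] [Mul R]
    [AddCommMonoid R] [PartialOrder R] [IsOrderedCancelAddMonoid R] {w c : ι → R} {x : ι} {t : R}
    (h : w x * c x < t * c x) :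
    ∑ y, w y * c y < ∑ y, Function.update w x t y * c y := by
  refine sum_lt_sum (fun y _ => ?_) ⟨x, mem_univ x, by simpa⟩
  rcases eq_or_ne y x with rfl | hy
  · simpa using h.le
  · simp [hy]

theorem forall_sum_mul_le_sum_mul_iff {ι R : Type*} [Fintype ι] [DecidableEq ι] [Ring R]
    [LinearOrder R] [IsStrictOrderedRing R] {w : ι → R} (hw : ∀ x, w x ∈ Set.Icc (0 : R) 1)
    (c : ι → R) :
    (∀ w' : ι → R, (∀ x, w' x ∈ Set.Icc (0 : R) 1) →
        ∑ x, w' x * c x ≤ ∑ x, w x * c x) ↔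
      ∀ x, (0 < c x → w x = 1) ∧ (c x < 0 → w x = 0) := by
  constructor
  · intro h x
    have best : ∀ t ∈ Set.Icc (0 : R) 1, t * c x ≤ w x * c x := fun t ht =>
      not_lt.1 fun hlt => (h _ fun y => by
        rcases eq_or_ne y x with rfl | hy
        · simpa using ht
        · simpa [hy] using hw y).not_gt (sum_mul_lt_sum_update_mul hlt)
    refine ⟨fun hc => le_antisymm (hw x).2 ?_, fun hc => le_antisymm ?_ (hw x).1⟩
    · exact le_of_mul_le_mul_right (by simpa using best 1 (by simp)) hc
    · exact nonpos_of_mul_nonneg_left (by simpa using best 0 (by simp)) hc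
  · intro h w' hw'
    refine sum_le_sum fun x _ => ?_
    rcases lt_trichotomy (c x) 0 with hc | hc | hc
    · rw [(h x).2 hc, zero_mul]
      exact mul_nonpos_of_nonneg_of_nonpos (hw' x).1 hc.le
    · simp [hc]
    · rw [(h x).1 hc, one_mul]
      exact mul_le_of_le_one_left hc.le (hw' x).2

end BestResponse

section Max

variable {ι : Type*} {s : Finset ι} {g : ι → ℝ}

theorem fsMax_eq_max' {t : Finset ℝ} (h : t.Nonempty) : fsMax t = t.max' h := by
  simp [fsMax, ← coe_max' h]

theorem le_fsMax_image {j : ι} (hj : j ∈ s) : g j ≤ fsMax (s.image g) := by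
  rw [fsMax_eq_max' (image_nonempty.2 ⟨j, hj⟩)]
  exact le_max' _ _ (mem_image_of_mem g hj)

theorem fsMax_image_le {a : ℝ} (ha : 0 ≤ a) (h : ∀ j ∈ s, g j ≤ a) :
    fsMax (s.image g) ≤ a := by
  rcases s.eq_empty_or_nonempty with rfl | hs
  · simpa [fsMax] using ha
  · rw [fsMax_eq_max' (hs.image g)]
    exact max'_le _ _ _ (forall_mem_image.2 h)

theorem exists_eq_fsMax_image (h : 0 < fsMax (s.image g)) :
    ∃ j ∈ s, g j = fsMax (s.image g) := by
  rcases s.eq_empty_or_nonempty with rfl | hs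
  · simp [fsMax] at h
  · rw [fsMax_eq_max' (hs.image g)]
    exact mem_image.1 (max'_mem _ _)

theorem fsMax_image_nonneg (h : ∀ j ∈ s, 0 ≤ g j) : 0 ≤ fsMax (s.image g) := by
  rcases s.eq_empty_or_nonempty with rfl | hs
  · simp [fsMax]
  · obtain ⟨j, hj⟩ := hs
    exact (h j hj).trans (le_fsMax_image hj)

end Max

section Competition

variable {n m : ℕ} {i j : Fin n} {q : Fin m}

theorem le_maxErase {g : Fin n → ℝ} (hji : j ≠ i) : g j ≤ maxErase i g :=
  le_fsMax_image (mem_erase.2 ⟨hji, mem_univ j⟩)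

theorem maxErase_le {g : Fin n → ℝ} {a : ℝ} (ha : 0 ≤ a) (h : ∀ j ≠ i, g j ≤ a) :
    maxErase i g ≤ a :=
  fsMax_image_le ha fun j hj => h j (ne_of_mem_erase hj)

theorem maxErase_nonneg {g : Fin n → ℝ} (h : ∀ j ≠ i, 0 ≤ g j) : 0 ≤ maxErase i g :=
  fsMax_image_nonneg fun j hj => h j (ne_of_mem_erase hj)

theorem exists_eq_maxErase {g : Fin n → ℝ} (h : 0 < maxErase i g) :
    ∃ j ≠ i, g j = maxErase i g := by
  obtain ⟨j, hj, hgj⟩ := exists_eq_fsMax_image h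
  exact ⟨j, ne_of_mem_erase hj, hgj⟩

theorem maxErase_congr {g g' : Fin n → ℝ} (h : ∀ j ≠ i, g j = g' j) :
    maxErase i g = maxErase i g' :=
  congrArg fsMax (image_congr fun j hj => h j (ne_of_mem_erase hj))

variable {f : Fin n → Fin m → ℝ} {V : Fin n → Finset (Fin m)}

theorem le_othersMax (hji : j ≠ i) (hq : q ∈ V j) : f j q ≤ othersMax f V i q :=
  le_fsMax_image (g := fun j => f j q) (mem_filter.2 ⟨mem_univ j, hji, hq⟩)

theorem othersMax_nonneg (hf : ∀ i q, 0 ≤ f i q) : 0 ≤ othersMax f V i q :=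
  fsMax_image_nonneg fun j _ => hf j q

theorem othersMax_le {a : ℝ} (ha : 0 ≤ a) (h : ∀ j ≠ i, q ∈ V j → f j q ≤ a) :
    othersMax f V i q ≤ a :=
  fsMax_image_le ha fun j hj => (mem_filter.1 hj).2.elim (h j)

theorem othersMax_update (V' : Finset (Fin m)) :
    othersMax f (Function.update V i V') i q = othersMax f V i q := by
  unfold othersMax
  congr 2
  exact filter_congr fun j _ => by
    rcases eq_or_ne j i with rfl | h
    · simp
    · simp [h]

end Competition

section PartitionGame

variable {n m : ℕ} {f : Fin n → Fin m → ℝ} {V : Fin n → Finset (Fin m)}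

theorem Hutil_update (i : Fin n) (V' : Finset (Fin m)) :
    Hutil f (Function.update V i V') i = ∑ q ∈ V', (f i q - othersMax f V i q) := by
  rw [Hutil, Function.update_self]
  exact sum_congr rfl fun q _ => by rw [othersMax_update]

theorem isNashP_iff :
    IsNashP f V ↔ ∀ i q, (q ∈ V i → othersMax f V i q ≤ f i q) ∧
      (q ∉ V i → f i q ≤ othersMax f V i q) := by
  refine forall_congr' fun i => ?_
  simp only [Hutil_update]
  rw [Hutil, forall_sum_le_sum_iff]
  simp only [sub_nonneg, sub_nonpos]

end PartitionGame

section WeightGame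

variable {n m : ℕ} {f : Fin n → Fin m → ℝ} {w : Fin n → Fin m → ℝ}

noncomputable def competingBid (f w : Fin n → Fin m → ℝ) (i : Fin n) (q : Fin m) : ℝ :=
  maxErase i (fun j => f j q * w j q)

theorem competingBid_nonneg (hf : ∀ i q, 0 ≤ f i q) (hw : InUnit w) (i : Fin n) (q : Fin m) :
    0 ≤ competingBid f w i q :=
  maxErase_nonneg fun j _ => mul_nonneg (hf j q) (hw j q).1

theorem mul_le_competingBid {i j : Fin n} {q : Fin m} (hji : j ≠ i) :
    f j q * w j q ≤ competingBid f w i q :=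
  le_maxErase (g := fun j => f j q * w j q) hji

theorem exists_eq_competingBid {i : Fin n} {q : Fin m} (h : 0 < competingBid f w i q) :
    ∃ k ≠ i, f k q * w k q = competingBid f w i q :=
  exists_eq_maxErase h

theorem Uutil_update (i : Fin n) (w' : Fin m → ℝ) :
    Uutil f (Function.update w i w') i = ∑ q, w' q * (f i q - competingBid f w i q) := by
  refine sum_congr rfl fun q _ => ?_
  rw [Function.update_self, competingBid,
    maxErase_congr fun j hj => by rw [Function.update_of_ne hj]]
  ring

theorem Uutil_eq (i : Fin n) : Uutil f w i = ∑ q, w i q * (f i q - competingBid f w i q) := by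
  simpa using Uutil_update (f := f) (w := w) i (w i)

theorem isNashW_iff (hw : InUnit w) :
    IsNashW f w ↔ ∀ i q, (competingBid f w i q < f i q → w i q = 1) ∧
      (f i q < competingBid f w i q → w i q = 0) := by
  refine forall_congr' fun i => ?_
  simpa only [Uutil_update, ← Uutil_eq, sub_pos, sub_neg] using
    forall_sum_mul_le_sum_mul_iff (hw i) fun q => f i q - competingBid f w i q

end WeightGame

section Correspondence

variable {n m : ℕ} {f : Fin n → Fin m → ℝ}

def indicatorWeights (V : Fin n → Finset (Fin m)) (i : Fin n) (q : Fin m) : ℝ :=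
  if q ∈ V i then 1 else 0

theorem inUnit_indicatorWeights (V : Fin n → Finset (Fin m)) : InUnit (indicatorWeights V) :=
  fun i q => by unfold indicatorWeights; split_ifs <;> simp

theorem filter_indicatorWeights_eq_one (V : Fin n → Finset (Fin m)) (i : Fin n) :
    univ.filter (fun q => indicatorWeights V i q = 1) = V i := by
  ext q
  by_cases hq : q ∈ V i <;> simp [indicatorWeights, hq]

theorem competingBid_indicatorWeights (hf : ∀ i q, 0 ≤ f i q) (V : Fin n → Finset (Fin m))
    (i : Fin n) (q : Fin m) : competingBid f (indicatorWeights V) i q = othersMax f V i q := by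
  refine le_antisymm (maxErase_le (othersMax_nonneg hf) fun j hj => ?_) ?_
  · by_cases hq : q ∈ V j
    · simpa [indicatorWeights, hq] using le_othersMax hj hq
    · simpa [indicatorWeights, hq] using othersMax_nonneg hf
  · refine othersMax_le (competingBid_nonneg hf (inUnit_indicatorWeights V) i q)
      fun j hji hq => ?_
    simpa [indicatorWeights, hq] using
      mul_le_competingBid (f := f) (w := indicatorWeights V) (q := q) hji

theorem IsNashP.isNashW_indicatorWeights (hf : ∀ i q, 0 ≤ f i q) {V : Fin n → Finset (Fin m)}
    (hP : IsNashP f V) : IsNashW f (indicatorWeights V) := by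
  rw [isNashW_iff (inUnit_indicatorWeights V)]
  intro i q
  rw [competingBid_indicatorWeights hf]
  have hiq := isNashP_iff.1 hP i q
  by_cases hq : q ∈ V i
  · exact ⟨fun _ => if_pos hq, fun hlt => absurd (hiq.1 hq) hlt.not_ge⟩
  · exact ⟨fun hlt => absurd (hiq.2 hq) hlt.not_ge, fun _ => if_neg hq⟩

theorem othersMax_filter_le_competingBid (hf : ∀ i q, 0 ≤ f i q) {w : Fin n → Fin m → ℝ}
    (hw : InUnit w) (i : Fin n) (q : Fin m) :
    othersMax f (fun j => univ.filter (fun q => w j q = 1)) i q ≤ competingBid f w i q :=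
  othersMax_le (competingBid_nonneg hf hw i q) fun j hji hq => by
    simpa [(mem_filter.1 hq).2] using mul_le_competingBid (f := f) (w := w) (q := q) hji

namespace IsNashW

variable {w : Fin n → Fin m → ℝ} {i : Fin n} {q : Fin m}

theorem competingBid_le_of_eq_one (hN : IsNashW f w) (hw : InUnit w) (h : w i q = 1) :
    competingBid f w i q ≤ f i q :=
  not_lt.1 fun hlt => by simpa [h] using ((isNashW_iff hw).1 hN i q).2 hlt

theorem le_competingBid_of_lt_one (hN : IsNashW f w) (hw : InUnit w) (h : w i q < 1) :
    f i q ≤ competingBid f w i q :=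
  not_lt.1 fun hlt => h.ne (((isNashW_iff hw).1 hN i q).1 hlt)

theorem exists_eq_one_of_lt_one (hN : IsNashW f w) (hw : InUnit w) (hf : ∀ i q, 0 ≤ f i q)
    (hi : w i q < 1) (hpos : 0 < competingBid f w i q) :
    ∃ k ≠ i, w k q = 1 ∧ f k q = competingBid f w i q := by
  obtain ⟨k, hki, hk⟩ := exists_eq_competingBid hpos
  have hwk : w k q = 1 := by
    by_contra hne
    have hlt : w k q < 1 := lt_of_le_of_ne (hw k q).2 hne
    have hfk : competingBid f w i q < f k q := by
      have : 0 < f k q := pos_of_mul_pos_left (hk.symm ▸ hpos) (hw k q).1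
      rw [← hk]
      exact mul_lt_of_lt_one_right this hlt
    have hbid : competingBid f w k q ≤ competingBid f w i q :=
      maxErase_le (competingBid_nonneg hf hw i q) fun j _ => by
        rcases eq_or_ne j i with rfl | hji
        · exact (mul_le_of_le_one_right (hf j q) (hw j q).2).trans
            (hN.le_competingBid_of_lt_one hw hi)
        · exact mul_le_competingBid hji
    exact hlt.ne (((isNashW_iff hw).1 hN k q).1 (hbid.trans_lt hfk))
  exact ⟨k, hki, hwk, by simpa [hwk] using hk⟩

theorem isNashP_filter_eq_one (hN : IsNashW f w) (hw : InUnit w) (hf : ∀ i q, 0 ≤ f i q) :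
    IsNashP f (fun i => univ.filter (fun q => w i q = 1)) := by
  refine isNashP_iff.2 fun i q => ⟨fun hq => ?_, fun hq => ?_⟩
  · exact (othersMax_filter_le_competingBid hf hw i q).trans
      (hN.competingBid_le_of_eq_one hw (mem_filter.1 hq).2)
  · have hi : w i q < 1 := lt_of_le_of_ne (hw i q).2 fun h => hq (by simp [h])
    rcases (competingBid_nonneg hf hw i q).eq_or_lt with h0 | hpos
    · exact ((hN.le_competingBid_of_lt_one hw hi).trans h0.ge).trans (othersMax_nonneg hf)
    · obtain ⟨k, hki, hk1, hk⟩ := hN.exists_eq_one_of_lt_one hw hf hi hpos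
      calc f i q ≤ competingBid f w i q := hN.le_competingBid_of_lt_one hw hi
        _ = f k q := hk.symm
        _ ≤ _ := le_othersMax hki (by simp [hk1])

end IsNashW

end Correspondence

open Classical in
theorem nash_partition_eq_image_of_nash_weight_general {n m : ℕ} (f : Fin n → Fin m → ℝ)
    (hf : ∀ i q, 0 ≤ f i q)
    (Vhat : Fin n → Finset (Fin m)) :
    IsNashP f Vhat ↔
      ∃ what : Fin n → Fin m → ℝ, InUnit what ∧ IsNashW f what ∧
        ∀ i, Vhat i = Finset.univ.filter (fun q => what i q = 1) := by
  constructor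
  · exact fun hP => ⟨indicatorWeights Vhat, inUnit_indicatorWeights Vhat,
      hP.isNashW_indicatorWeights hf, fun i => (filter_indicatorWeights_eq_one Vhat i).symm⟩
  · rintro ⟨w, hw, hN, hV⟩
    rw [funext hV]
    exact hN.isNashP_filter_eq_one hw hf

open Classical in
theorem nash_partition_eq_image_of_nash_weight {n m : ℕ} (f : Fin n → Fin m → ℝ)
    (hf : ∀ i q, 0 ≤ f i q)
    (hnt : ∀ q : Fin m, ∃ j : Fin n, ¬ Dominating f j q)
    (Vhat : Fin n → Finset (Fin m)) :
    IsNashP f Vhat ↔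
      ∃ what : Fin n → Fin m → ℝ, InUnit what ∧ IsNashW f what ∧
        ∀ i, Vhat i = Finset.univ.filter (fun q => what i q = 1) :=
  nash_partition_eq_image_of_nash_weight_general f hf Vhat
end

section
/- Suppose n ≥ 2 and for each task q there is a unique dominating agent i* q, i.e., f (i* q) q > f j q for every agent j ≠ i* q. Let γ̲ = min_{i,q} γ i q > 0 and δ = min_q (f (i* q) q − max_{j ≠ i* q} f j q) > 0. Then every PBRAG trajectory W satisfies W t (i* q) q = 1 for every task q and all t ≥ ⌈1 / (γ̲ * δ)⌉. -/
open Finset Filter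

noncomputable def clamp (x : ℝ) : ℝ := max 0 (min x 1)

/-- One step of the projected best-response ascending gradient dynamics. -/
noncomputable def pbrag {n m : ℕ} (f γ : Fin n → Fin m → ℝ)
    (w : Fin n → Fin m → ℝ) : Fin n → Fin m → ℝ :=
  fun i q => clamp (w i q + γ i q * (f i q - maxErase i (fun j => f j q * w j q)))

/-! Since weights stay in `[0, 1]` and rewards are nonnegative, every opponent's bid
`f j q * w j q` is at most `f j q`. Hence at each step the weight of the dominating agent of `q`
grows by at least `γ̲ δ` until it is clamped at `1`, so it equals `1` after `⌈1 / (γ̲ δ)⌉` steps. -/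

lemma le_fsMax {s : Finset ℝ} {x : ℝ} (hx : x ∈ s) : x ≤ fsMax s := by
  obtain ⟨b, hb⟩ := s.max_of_mem hx
  simpa [fsMax, hb] using Finset.le_max_of_eq hx hb

lemma fsMax_mem {s : Finset ℝ} (hs : s.Nonempty) : fsMax s ∈ s := by
  obtain ⟨b, hb⟩ := s.max_of_nonempty hs
  simpa [fsMax, hb] using Finset.mem_of_max hb

lemma fsMin_le {s : Finset ℝ} {x : ℝ} (hx : x ∈ s) : fsMin s ≤ x := by
  obtain ⟨b, hb⟩ := s.min_of_mem hx
  simpa [fsMin, hb] using Finset.min_le_of_eq hx hb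

lemma fsMax_image_mono {ι : Type*} [DecidableEq ι] {s : Finset ι} {g g' : ι → ℝ}
    (h : ∀ j ∈ s, g j ≤ g' j) : fsMax (s.image g) ≤ fsMax (s.image g') := by
  rcases s.eq_empty_or_nonempty with rfl | hs
  · simp
  obtain ⟨k, hk, hgk⟩ := Finset.mem_image.1 (fsMax_mem (hs.image g))
  rw [← hgk]
  exact (h k hk).trans (le_fsMax (Finset.mem_image_of_mem g' hk))

lemma clamp_mem_Icc (x : ℝ) : clamp x ∈ Set.Icc (0 : ℝ) 1 :=
  ⟨le_max_left _ _, max_le zero_le_one (min_le_right _ _)⟩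

lemma min_one_le_clamp (x : ℝ) : min 1 x ≤ clamp x :=
  (min_comm 1 x).trans_le (le_max_right _ _)

lemma min_one_mul_le_of_min_one_add_le {x : ℕ → ℝ} {c : ℝ} (h0 : 0 ≤ x 0)
    (hstep : ∀ t, min 1 (x t + c) ≤ x (t + 1)) (t : ℕ) : min 1 (t * c) ≤ x t := by
  induction t with
  | zero => simpa using h0
  | succ t ih =>
    refine le_trans ?_ (hstep t)
    calc min 1 ((t + 1 : ℕ) * c) ≤ min 1 (min 1 (t * c) + c) := by
          refine le_min (min_le_left _ _) ?_
          push_cast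
          rcases le_total 0 c with hc | hc
          · rw [← min_add_add_right]
            exact le_min ((min_le_left _ _).trans (by linarith))
              ((min_le_right _ _).trans (by linarith))
          · have htc : (t : ℝ) * c ≤ 0 := mul_nonpos_of_nonneg_of_nonpos t.cast_nonneg hc
            rw [min_eq_right (by linarith : (t : ℝ) * c ≤ 1)]
            exact (min_le_right _ _).trans (by linarith)
      _ ≤ min 1 (x t + c) := by gcongr

lemma pbrag_inUnit {n m : ℕ} (f γ w : Fin n → Fin m → ℝ) : InUnit (pbrag f γ w) :=
  fun _ _ => clamp_mem_Icc _

lemma inUnit_of_pbrag_trajectory {n m : ℕ} {f γ : Fin n → Fin m → ℝ}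
    {W : ℕ → Fin n → Fin m → ℝ} (hW0 : InUnit (W 0))
    (hWs : ∀ t, W (t + 1) = pbrag f γ (W t)) : ∀ t, InUnit (W t)
  | 0 => hW0
  | t + 1 => hWs t ▸ pbrag_inUnit f γ (W t)

lemma min_one_add_le_pbrag {n m : ℕ} {f γ w : Fin n → Fin m → ℝ} (hf : ∀ i q, 0 ≤ f i q)
    (hw : InUnit w) {i : Fin n} {q : Fin m} (hγ : 0 ≤ γ i q) {c : ℝ}
    (hc : c ≤ γ i q * (f i q - maxErase i (fun j => f j q))) :
    min 1 (w i q + c) ≤ pbrag f γ w i q := by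
  have hbids : maxErase i (fun j => f j q * w j q) ≤ maxErase i (fun j => f j q) :=
    fsMax_image_mono fun j _ => mul_le_of_le_one_right (hf j q) (hw j q).2
  have hinc : c ≤ γ i q * (f i q - maxErase i (fun j => f j q * w j q)) :=
    hc.trans (by gcongr)
  exact (min_le_min_left 1 (by linarith)).trans (min_one_le_clamp _)

lemma one_le_mul_of_ceil_one_div_le {c : ℝ} (hc : 0 < c) {t : ℕ} (ht : ⌈1 / c⌉ ≤ (t : ℤ)) :
    1 ≤ t * c := by
  have : 1 / c ≤ t := by exact_mod_cast Int.ceil_le.mp ht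
  rwa [div_le_iff₀ hc] at this

theorem pbrag_dominating_reaches_one_general {n m : ℕ} (f : Fin n → Fin m → ℝ)
    (hf : ∀ i q, 0 ≤ f i q)
    (istar : Fin m → Fin n)
    (γ : Fin n → Fin m → ℝ)
    (γlow : ℝ)
    (hγlow : γlow = fsMin (Finset.univ.image (fun p : Fin n × Fin m => γ p.1 p.2)))
    (hγlowpos : 0 < γlow)
    (δ : ℝ)
    (hδ : δ = fsMin (Finset.univ.image
      (fun q => f (istar q) q - maxErase (istar q) (fun j => f j q))))
    (hδpos : 0 < δ)
    (W : ℕ → Fin n → Fin m → ℝ)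
    (hW0 : InUnit (W 0)) (hWs : ∀ t, W (t + 1) = pbrag f γ (W t)) :
    ∀ (q : Fin m) (t : ℕ), ⌈1 / (γlow * δ)⌉ ≤ (t : ℤ) → W t (istar q) q = 1 := by
  intro q t ht
  have hunit := inUnit_of_pbrag_trajectory hW0 hWs
  have hγle : γlow ≤ γ (istar q) q :=
    hγlow ▸ fsMin_le (Finset.mem_image_of_mem (fun p : Fin n × Fin m => γ p.1 p.2)
      (mem_univ (istar q, q)))
  have hδle : δ ≤ f (istar q) q - maxErase (istar q) (fun j => f j q) :=
    hδ ▸ fsMin_le (Finset.mem_image_of_mem _ (mem_univ q))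
  have hγnonneg : 0 ≤ γ (istar q) q := hγlowpos.le.trans hγle
  have hgrowth : min 1 (t * (γlow * δ)) ≤ W t (istar q) q :=
    min_one_mul_le_of_min_one_add_le (x := fun t => W t (istar q) q) (hW0 _ _).1 (fun t => by
      rw [hWs]
      exact min_one_add_le_pbrag hf (hunit t) hγnonneg
        (mul_le_mul hγle hδle hδpos.le hγnonneg)) t
  rw [min_eq_left (one_le_mul_of_ceil_one_div_le (mul_pos hγlowpos hδpos) ht)] at hgrowth
  exact le_antisymm (hunit t _ _).2 hgrowth

theorem pbrag_dominating_reaches_one {n m : ℕ} (hn : 2 ≤ n) (f : Fin n → Fin m → ℝ)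
    (hf : ∀ i q, 0 ≤ f i q)
    (istar : Fin m → Fin n)
    (hstar : ∀ q, ∀ j, j ≠ istar q → f j q < f (istar q) q)
    (γ : Fin n → Fin m → ℝ) (hγ : ∀ i q, 0 < γ i q)
    (γlow : ℝ)
    (hγlow : γlow = fsMin (Finset.univ.image (fun p : Fin n × Fin m => γ p.1 p.2)))
    (hγlowpos : 0 < γlow)
    (δ : ℝ)
    (hδ : δ = fsMin (Finset.univ.image
      (fun q => f (istar q) q - maxErase (istar q) (fun j => f j q))))
    (hδpos : 0 < δ)
    (W : ℕ → Fin n → Fin m → ℝ)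
    (hW0 : InUnit (W 0)) (hWs : ∀ t, W (t + 1) = pbrag f γ (W t)) :
    ∀ (q : Fin m) (t : ℕ), ⌈1 / (γlow * δ)⌉ ≤ (t : ℤ) → W t (istar q) q = 1 :=
  pbrag_dominating_reaches_one_general f hf istar γ γlow hγlow hγlowpos δ hδ hδpos W hW0 hWs
end
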